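/- Let N = 1 and write W = W₁. For every Schwartz function ψ ∈ 𝒮(ℝ, ℂ): 𝒬₁(e^{2πix})(Wψ) = W(Aψ) where (Aψ)(t) = e^{2πit}(1 − 2πit)ψ(t), and 𝒬₁(e^{−2πix})(Wψ) = W(A†ψ) where (A†ψ)(t) = e^{−2πit}(1 + 2πit)ψ(t). -/

import Mathlib

noncomputable section

/-- Partial derivative in the first variable. -/
def pdx (φ : ℝ × ℝ → ℂ) (p : ℝ × ℝ) : ℂ := fderiv ℝ φ p (1, 0)

/-- Partial derivative in the second variable. -/
def pdy (φ : ℝ × ℝ → ℂ) (p : ℝ × ℝ) : ℂ := fderiv ℝ φ p (0, 1)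

/-- The prequantization map `𝒬_N` of the torus, acting on functions on `ℝ²`. -/
def Q (N : ℤ) (f : ℝ × ℝ → ℂ) (φ : ℝ × ℝ → ℂ) : ℝ × ℝ → ℂ := fun p =>
  (1 / (2 * (Real.pi : ℂ) * Complex.I * (N : ℂ))) *
      (pdx f p * (pdy φ p - 2 * (Real.pi : ℂ) * Complex.I * (N : ℂ) * (p.1 : ℂ) * φ p) -
        pdy f p * pdx φ p) +
    f p * φ p

/-- The Weil–Brezin–Zak transform `(W_N ψ)(x,y) = Σ_{k∈ℤ} ψ(x+k) e^{−2πiNky}`. -/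
def WBZ (N : ℤ) (ψ : ℝ → ℂ) : ℝ × ℝ → ℂ := fun p =>
  ∑' k : ℤ, ψ (p.1 + k) * Complex.exp (-(2 * (Real.pi : ℂ) * Complex.I * (N : ℂ) * (k : ℂ) * (p.2 : ℂ)))

/-!
Differentiating the `k`-th term of `W_N ψ` in `y` brings down `-2πiNk = -2πiN((x + k) - x)`, so
the covariant derivative `∂_y - 2πiNx` occurring in `𝒬_N` acts on `W_N ψ` as `W_N` of
multiplication by `-2πiNt`. For a `1`-periodic `g`, multiplication by `g(x)` and by `g'(x)` passes
through `W_N`, hence `𝒬_N(g(x))(W_N ψ) = g W_N ψ - g' W_N(tψ) = W_N((g - t g')ψ)`; for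
`g = e^{±2πit}` this is `W(Aψ)`, resp. `W(A†ψ)`. Termwise differentiation is justified by the
Schwartz decay of `ψ` and `ψ'`, which is uniform under translations by a bounded amount.
-/

section

open Function Metric ContinuousLinearMap

local notation "τ" => (2 * (Real.pi : ℂ) * Complex.I)

theorem summable_one_div_one_add_abs_sq : Summable fun k : ℤ => 1 / (1 + |(k : ℝ)|) ^ 2 := by
  refine Summable.of_norm_bounded_eventually (Real.summable_one_div_int_pow.mpr one_lt_two) ?_
  filter_upwards [(Set.finite_singleton (0 : ℤ)).compl_mem_cofinite] with k hk
  have hk : (k : ℝ) ≠ 0 := by simpa using hk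
  rw [Real.norm_of_nonneg (by positivity), ← sq_abs (k : ℝ)]
  gcongr
  linarith

theorem SchwartzMap.exists_summable_bound_translate {E : Type*} [NormedAddCommGroup E]
    [NormedSpace ℝ E] (φ : SchwartzMap ℝ E) (x₀ : ℝ) :
    ∃ u : ℤ → ℝ, Summable u ∧
      ∀ (k : ℤ), ∀ x ∈ ball x₀ 1, (1 + |(k : ℝ)|) * ‖φ (x + k)‖ ≤ u k := by
  obtain ⟨C, hC⟩ : ∃ C, ∀ t : ℝ, (1 + |t|) ^ 3 * ‖φ t‖ ≤ C := ⟨_, fun t => by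
    simpa using φ.one_add_le_sup_seminorm_apply (𝕜 := ℝ) (m := (3, 0)) le_rfl le_rfl t⟩
  refine ⟨fun k => (|x₀| + 2) ^ 3 * C * (1 / (1 + |(k : ℝ)|) ^ 2),
    summable_one_div_one_add_abs_sq.mul_left _, fun k x hx => ?_⟩
  -- Peetre's inequality
  have hk : 1 + |(k : ℝ)| ≤ (|x₀| + 2) * (1 + |x + k|) := by
    have h₁ : |(k : ℝ)| ≤ |x + k| + |x| := by simpa using abs_sub (x + k) x
    have h₂ : |x| - |x₀| ≤ |x - x₀| := abs_sub_abs_le_abs_sub x x₀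
    rw [mem_ball, Real.dist_eq] at hx
    nlinarith [abs_nonneg (x + k), abs_nonneg x₀]
  dsimp only
  rw [mul_one_div, le_div_iff₀ (by positivity)]
  calc (1 + |(k : ℝ)|) * ‖φ (x + k)‖ * (1 + |(k : ℝ)|) ^ 2
      = (1 + |(k : ℝ)|) ^ 3 * ‖φ (x + k)‖ := by ring
    _ ≤ ((|x₀| + 2) * (1 + |x + k|)) ^ 3 * ‖φ (x + k)‖ := by gcongr
    _ = (|x₀| + 2) ^ 3 * ((1 + |x + k|) ^ 3 * ‖φ (x + k)‖) := by ring
    _ ≤ (|x₀| + 2) ^ 3 * C := by gcongr; exact hC _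

theorem Function.Periodic.deriv {𝕜 F : Type*} [NontriviallyNormedField 𝕜] [NormedAddCommGroup F]
    [NormedSpace 𝕜 F] {g : 𝕜 → F} {c : 𝕜} (hg : Periodic g c) :
    Periodic (deriv g) c := fun x => by
  rw [← deriv_comp_add_const, show (fun t => g (t + c)) = g from funext hg]

theorem periodic_exp_two_pi_I_int_mul (m : ℤ) :
    Periodic (fun t : ℝ => Complex.exp (τ * m * t)) 1 := fun t => by
  dsimp only
  rw [show τ * m * ((t + 1 : ℝ) : ℂ) = τ * m * t + m * τ by push_cast; ring, Complex.exp_add,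
    Complex.exp_int_mul_two_pi_mul_I, mul_one]

theorem hasDerivAt_exp_mul_ofReal (c : ℂ) (t : ℝ) :
    HasDerivAt (fun t : ℝ => Complex.exp (c * t)) (c * Complex.exp (c * t)) t := by
  simpa [mul_comm] using ((hasDerivAt_id t).ofReal_comp.const_mul c).cexp

theorem hasFDerivAt_comp_fst {F : Type*} [NormedAddCommGroup F] [NormedSpace ℝ F] {g : ℝ → F}
    {g' : F} {p : ℝ × ℝ} (hg : HasDerivAt g g' p.1) :
    HasFDerivAt (fun q : ℝ × ℝ => g q.1) ((fst ℝ ℝ ℝ).smulRight g') p :=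
  (hasDerivAt_iff_hasFDerivAt.1 hg).comp p hasFDerivAt_fst

theorem hasFDerivAt_comp_snd {F : Type*} [NormedAddCommGroup F] [NormedSpace ℝ F] {g : ℝ → F}
    {g' : F} {p : ℝ × ℝ} (hg : HasDerivAt g g' p.2) :
    HasFDerivAt (fun q : ℝ × ℝ => g q.2) ((snd ℝ ℝ ℝ).smulRight g') p :=
  (hasDerivAt_iff_hasFDerivAt.1 hg).comp p hasFDerivAt_snd

theorem norm_fst_smulRight_add_snd_smulRight_le {F : Type*} [NormedAddCommGroup F]
    [NormedSpace ℝ F] (a b : F) :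
    ‖(fst ℝ ℝ ℝ).smulRight a + (snd ℝ ℝ ℝ).smulRight b‖ ≤ ‖a‖ + ‖b‖ := by
  refine opNorm_le_bound _ (by positivity) fun v => ?_
  calc ‖v.1 • a + v.2 • b‖ ≤ ‖v.1‖ * ‖a‖ + ‖v.2‖ * ‖b‖ := by
        simpa [norm_smul] using norm_add_le (v.1 • a) (v.2 • b)
    _ ≤ ‖v‖ * ‖a‖ + ‖v‖ * ‖b‖ := by gcongr; exacts [norm_fst_le v, norm_snd_le v]
    _ = (‖a‖ + ‖b‖) * ‖v‖ := by ring

theorem pdx_comp_fst {g : ℝ → ℂ} {p : ℝ × ℝ} (hg : DifferentiableAt ℝ g p.1) :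
    pdx (fun q => g q.1) p = deriv g p.1 := by
  simp [pdx, (hasFDerivAt_comp_fst hg.hasDerivAt).fderiv]

theorem pdy_comp_fst {g : ℝ → ℂ} {p : ℝ × ℝ} (hg : DifferentiableAt ℝ g p.1) :
    pdy (fun q => g q.1) p = 0 := by
  simp [pdy, (hasFDerivAt_comp_fst hg.hasDerivAt).fderiv]

def wbzTerm (N : ℤ) (φ : ℝ → ℂ) (k : ℤ) (p : ℝ × ℝ) : ℂ :=
  φ (p.1 + k) * Complex.exp (-(τ * N * k * p.2))

theorem WBZ_eq_tsum_wbzTerm (N : ℤ) (φ : ℝ → ℂ) : WBZ N φ = fun p => ∑' k, wbzTerm N φ k p :=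
  rfl

theorem norm_wbzTerm (N : ℤ) (φ : ℝ → ℂ) (k : ℤ) (p : ℝ × ℝ) :
    ‖wbzTerm N φ k p‖ = ‖φ (p.1 + k)‖ := by
  have : -(τ * N * k * p.2) = ((-(2 * Real.pi * N * k * p.2) : ℝ) : ℂ) * Complex.I := by
    push_cast; ring
  rw [wbzTerm, norm_mul, this, Complex.norm_exp_ofReal_mul_I, mul_one]

theorem wbzTerm_periodic_mul {g : ℝ → ℂ} (hg : Periodic g 1) (N : ℤ) (φ : ℝ → ℂ) (k : ℤ)
    (p : ℝ × ℝ) : wbzTerm N (fun t => g t * φ t) k p = g p.1 * wbzTerm N φ k p := by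
  rw [wbzTerm, wbzTerm, show g (p.1 + k) = g p.1 by simpa using hg.int_mul k p.1, mul_assoc]

theorem hasFDerivAt_wbzTerm (N k : ℤ) {φ : ℝ → ℂ} {p : ℝ × ℝ}
    (hφ : DifferentiableAt ℝ φ (p.1 + k)) :
    HasFDerivAt (wbzTerm N φ k) ((fst ℝ ℝ ℝ).smulRight (wbzTerm N (deriv φ) k p) +
      (snd ℝ ℝ ℝ).smulRight (-(τ * N * k) * wbzTerm N φ k p)) p := by
  have hx : HasFDerivAt (fun q : ℝ × ℝ => φ (q.1 + k))
      ((fst ℝ ℝ ℝ).smulRight (deriv φ (p.1 + k))) p :=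
    hasFDerivAt_comp_fst (hφ.hasDerivAt.comp_add_const _ _)
  have hy : HasFDerivAt (fun q : ℝ × ℝ => Complex.exp (-(τ * N * k * q.2)))
      ((snd ℝ ℝ ℝ).smulRight (Complex.exp (-(τ * N * k * p.2)) * -(τ * N * k))) p :=
    hasFDerivAt_comp_snd <|
      ((hasDerivAt_id _).ofReal_comp.const_mul (τ * N * k)).neg.cexp.congr_deriv (by simp)
  refine (hx.mul hy).congr_fderiv ?_
  ext <;> simp [wbzTerm] <;> ring

theorem hasSum_wbzTerm (N : ℤ) (φ : SchwartzMap ℝ ℂ) (p : ℝ × ℝ) :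
    HasSum (fun k => wbzTerm N φ k p) (WBZ N φ p) := by
  obtain ⟨u, hu, hbound⟩ := φ.exists_summable_bound_translate p.1
  refine (Summable.of_norm_bounded hu fun k => ?_).hasSum
  rw [norm_wbzTerm]
  exact (le_mul_of_one_le_left (norm_nonneg _) (by simp)).trans
    (hbound k p.1 (mem_ball_self one_pos))

theorem hasSum_wbzTerm_ofReal_mul (N : ℤ) (ψ : SchwartzMap ℝ ℂ) (p : ℝ × ℝ) :
    HasSum (fun k => wbzTerm N (fun t => t * ψ t) k p) (WBZ N (fun t => t * ψ t) p) := by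
  have htψ : (fun t : ℝ => t * ψ t) = SchwartzMap.smulLeftCLM ℂ (fun t : ℝ => (t : ℂ)) ψ := by
    ext t
    rw [SchwartzMap.smulLeftCLM_apply_apply (by fun_prop), smul_eq_mul]
  rw [htψ]
  exact hasSum_wbzTerm N _ p

theorem exists_summable_bound_fderiv_wbzTerm (N : ℤ) (ψ : SchwartzMap ℝ ℂ) (p₀ : ℝ × ℝ) :
    ∃ u : ℤ → ℝ, Summable u ∧ ∀ (k : ℤ), ∀ q ∈ ball p₀ 1,
      ‖(fst ℝ ℝ ℝ).smulRight (wbzTerm N (deriv ψ) k q) +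
        (snd ℝ ℝ ℝ).smulRight (-(τ * N * k) * wbzTerm N ψ k q)‖ ≤ u k := by
  obtain ⟨u₁, hu₁, hbound₁⟩ :=
    (SchwartzMap.derivCLM ℝ ℂ ψ).exists_summable_bound_translate p₀.1
  obtain ⟨u₂, hu₂, hbound₂⟩ := ψ.exists_summable_bound_translate p₀.1
  refine ⟨fun k => u₁ k + 2 * Real.pi * |(N : ℝ)| * u₂ k, hu₁.add (hu₂.mul_left _),
    fun k q hq => (norm_fst_smulRight_add_snd_smulRight_le _ _).trans ?_⟩
  have hq₁ : q.1 ∈ ball p₀.1 1 := by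
    rw [← ball_prod_same] at hq
    exact hq.1
  have h₁ : ‖deriv ψ (q.1 + k)‖ ≤ u₁ k := by
    simpa using (le_mul_of_one_le_left (norm_nonneg _) (by simp)).trans (hbound₁ k q.1 hq₁)
  have h₂ : |(k : ℝ)| * ‖ψ (q.1 + k)‖ ≤ u₂ k :=
    (mul_le_mul_of_nonneg_right (by simp) (norm_nonneg _)).trans (hbound₂ k q.1 hq₁)
  have hτ : ‖τ * N * k‖ = 2 * Real.pi * |(N : ℝ)| * |(k : ℝ)| := by
    simp [abs_of_pos Real.pi_pos]
  rw [norm_mul, norm_wbzTerm, norm_wbzTerm, norm_neg, hτ, mul_assoc _ |(k : ℝ)|]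
  exact add_le_add h₁ (by gcongr)

theorem hasSum_pdy_WBZ (N : ℤ) (ψ : SchwartzMap ℝ ℂ) (p : ℝ × ℝ) :
    HasSum (fun k => -(τ * N * k) * wbzTerm N ψ k p) (pdy (WBZ N ψ) p) := by
  obtain ⟨u, hu, hbound⟩ := exists_summable_bound_fderiv_wbzTerm N ψ p
  have hp : p ∈ ball p 1 := mem_ball_self one_pos
  have hderiv : HasFDerivAt (WBZ N ψ) _ p :=
    hasFDerivAt_tsum_of_isPreconnected hu isOpen_ball (convex_ball p 1).isPreconnected
      (fun k q _ => hasFDerivAt_wbzTerm N k ψ.differentiableAt) hbound hp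
      (hasSum_wbzTerm N ψ p).summable hp
  rw [pdy, hderiv.fderiv]
  simpa using ((Summable.of_norm_bounded hu fun k => hbound k p hp).hasSum).mapL
    (apply ℝ ℂ ((0 : ℝ), (1 : ℝ)))

theorem pdy_WBZ_sub_mul_WBZ (N : ℤ) (ψ : SchwartzMap ℝ ℂ) (p : ℝ × ℝ) :
    pdy (WBZ N ψ) p - τ * N * p.1 * WBZ N ψ p = -(τ * N) * WBZ N (fun t => t * ψ t) p := by
  have hterm : ∀ k : ℤ, -(τ * N) * wbzTerm N (fun t => t * ψ t) k p
      = -(τ * N * k) * wbzTerm N ψ k p - τ * N * p.1 * wbzTerm N ψ k p := fun k => by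
    simp only [wbzTerm]
    push_cast
    ring
  have h := (hasSum_wbzTerm_ofReal_mul N ψ p).mul_left (-(τ * N))
  simp only [hterm] at h
  exact ((hasSum_pdy_WBZ N ψ p).sub ((hasSum_wbzTerm N ψ p).mul_left _)).unique h

theorem Q_comp_fst_WBZ_of_periodic {g : ℝ → ℂ} (hg : Differentiable ℝ g) (hper : Periodic g 1)
    {N : ℤ} (hN : N ≠ 0) (ψ : SchwartzMap ℝ ℂ) :
    Q N (fun q => g q.1) (WBZ N ψ) = WBZ N (fun t => (g t - t * deriv g t) * ψ t) := by
  funext p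
  have hterm : ∀ k : ℤ, wbzTerm N (fun t => (g t - t * deriv g t) * ψ t) k p =
      g p.1 * wbzTerm N ψ k p - deriv g p.1 * wbzTerm N (fun t => t * ψ t) k p := fun k => by
    rw [← wbzTerm_periodic_mul hper, ← wbzTerm_periodic_mul hper.deriv]
    simp only [wbzTerm]
    ring
  have hWBZ : WBZ N (fun t => (g t - t * deriv g t) * ψ t) p =
      g p.1 * WBZ N ψ p - deriv g p.1 * WBZ N (fun t => t * ψ t) p := by
    rw [WBZ_eq_tsum_wbzTerm]
    simp only [hterm]
    exact (((hasSum_wbzTerm N ψ p).mul_left _).sub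
      ((hasSum_wbzTerm_ofReal_mul N ψ p).mul_left _)).tsum_eq
  have hτN : τ * N ≠ 0 := by simp [hN, Real.pi_ne_zero]
  simp only [Q]
  rw [pdx_comp_fst (hg _), pdy_comp_fst (hg _), pdy_WBZ_sub_mul_WBZ, hWBZ]
  field_simp
  ring

theorem Q_exp_int_mul_WBZ {N : ℤ} (hN : N ≠ 0) (m : ℤ) (ψ : SchwartzMap ℝ ℂ) :
    Q N (fun q => Complex.exp (τ * m * q.1)) (WBZ N ψ) =
      WBZ N (fun t => Complex.exp (τ * m * t) * (1 - τ * m * t) * ψ t) := by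
  rw [Q_comp_fst_WBZ_of_periodic (fun t => (hasDerivAt_exp_mul_ofReal _ t).differentiableAt)
    (periodic_exp_two_pi_I_int_mul m) hN]
  congr 1
  funext t
  rw [(hasDerivAt_exp_mul_ofReal _ t).deriv]
  ring

end

/-- Under the Weil–Brezin–Zak transform (with `N = 1`), `𝒬₁(e^{±2πix})` go over to
the operators `A` and `A†` on `L²(ℝ, ℂ)`:
`(Aψ)(t) = e^{2πit}(1 − 2πit)ψ(t)`, `(A†ψ)(t) = e^{−2πit}(1 + 2πit)ψ(t)`. -/
theorem wbz_intertwines_A (ψ : SchwartzMap ℝ ℂ) :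
    Q 1 (fun q => Complex.exp (2 * (Real.pi : ℂ) * Complex.I * (q.1 : ℂ))) (WBZ 1 ⇑ψ) =
        WBZ 1 (fun t : ℝ =>
          Complex.exp (2 * (Real.pi : ℂ) * Complex.I * (t : ℂ)) *
            (1 - 2 * (Real.pi : ℂ) * Complex.I * (t : ℂ)) * ψ t) ∧
    Q 1 (fun q => Complex.exp (-(2 * (Real.pi : ℂ) * Complex.I * (q.1 : ℂ)))) (WBZ 1 ⇑ψ) =
        WBZ 1 (fun t : ℝ =>
          Complex.exp (-(2 * (Real.pi : ℂ) * Complex.I * (t : ℂ))) *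
            (1 + 2 * (Real.pi : ℂ) * Complex.I * (t : ℂ)) * ψ t) := by
  constructor
  · simpa only [Int.cast_one, mul_one] using Q_exp_int_mul_WBZ one_ne_zero 1 ψ
  · simpa only [Int.cast_neg, Int.cast_one, mul_neg, mul_one, neg_mul, sub_neg_eq_add]
      using Q_exp_int_mul_WBZ one_ne_zero (-1) ψ
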